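/- Let n, s be positive integers, let G be a finite group and N a normal subgroup of G with |G:N| = n such that N contains exactly s non-central G-conjugacy classes. Then |N| < n^(2^s) · (s+1) · ∏_{i=0}^{s-1} (s+1-i)^(2^(s-1-i)). -/

import Mathlib

/-!
Let `z = |N ∩ Z(G)|` and `t = |N : N ∩ Z(G)|`, so that `|N| = z t`. Dividing the class equation
of `N`, a union of `G`-classes, by `|N|` gives `1/t + ∑_C n / |C_G(x_C)| = 1`, a sum of `s + 1`
fractions with numerators `1` and `n`. If `k + 1` such fractions add up to `c / b`, one of them is
at least `1 / ((k + 1) b)`: either it is `1/t`, so `t ≤ (k + 1) b`, or it is some `n / d` with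
`d ≤ n (k + 1) b`, and removing it leaves `k` fractions adding up to a fraction with denominator
`b d`. By induction `t ≤ n^(2^s - 1) ∏_{i<s} (s+1-i)^(2^(s-1-i))`. Moreover each centralizer
`C_G(x_C)` properly contains `N ∩ Z(G)`, hence has order at least `2z`; since `1/t ≤ 1/2`, the
equation forces `z ≤ s n`, and `|N| = z t` gives the bound.
-/

open Finset Subgroup

/-- The bound on `d₀` in `le_egyptianBound_of_inv_add_sum_eq`: removing a fraction `n / d` with
`d ≤ n (k + 2) b` from `k + 2` fractions adding up to `c / b` leaves `k + 1` fractions whose sum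
has denominator `b d ≤ n (k + 2) b²`. -/
def egyptianBound (n : ℕ) : ℕ → ℕ → ℕ
  | 0, b => b
  | k + 1, b => egyptianBound n k (n * (k + 2) * b ^ 2)

theorem egyptianBound_mono (n : ℕ) : ∀ k, Monotone (egyptianBound n k)
  | 0 => fun _ _ h => h
  | k + 1 => fun _ _ h => egyptianBound_mono n k (by gcongr)

theorem succ_mul_le_egyptianBound {n : ℕ} (hn : 0 < n) :
    ∀ k b, (k + 1) * b ≤ egyptianBound n k b
  | 0, b => by simp [egyptianBound]
  | k + 1, b => by
    calc (k + 1 + 1) * b ≤ n * (k + 2) * b ^ 2 := by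
          rcases b.eq_zero_or_pos with rfl | hb
          · simp
          · calc (k + 1 + 1) * b = 1 * (k + 2) * b := by ring
              _ ≤ n * (k + 2) * b := by gcongr; omega
              _ ≤ n * (k + 2) * b ^ 2 := by gcongr; exact Nat.le_self_pow two_ne_zero b
      _ ≤ (k + 1) * (n * (k + 2) * b ^ 2) := Nat.le_mul_of_pos_left _ k.succ_pos
      _ ≤ egyptianBound n (k + 1) b := succ_mul_le_egyptianBound hn k _

theorem egyptianBound_eq (n : ℕ) : ∀ k b, egyptianBound n k b =
    b ^ 2 ^ k * n ^ (2 ^ k - 1) * ∏ i ∈ range k, (k + 1 - i) ^ 2 ^ (k - 1 - i)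
  | 0, b => by simp [egyptianBound]
  | k + 1, b => by
    have hprod : ∏ i ∈ range (k + 1), (k + 1 + 1 - i) ^ 2 ^ (k + 1 - 1 - i) =
        (∏ i ∈ range k, (k + 1 - i) ^ 2 ^ (k - 1 - i)) * (k + 2) ^ 2 ^ k := by
      rw [prod_range_succ']
      refine congrArg₂ (· * ·) (prod_congr rfl fun i _ => ?_)
        (by simp only [Nat.sub_zero, Nat.add_sub_cancel])
      rw [show k + 1 + 1 - (i + 1) = k + 1 - i by omega,
        show k + 1 - 1 - (i + 1) = k - 1 - i by omega]
    have hexp : 2 ^ (k + 1) - 1 = 2 ^ k + (2 ^ k - 1) := by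
      have := Nat.one_le_two_pow (n := k)
      rw [pow_succ]
      omega
    rw [egyptianBound, egyptianBound_eq n k, hprod, hexp, mul_pow, mul_pow, ← pow_mul,
      pow_succ' 2 k, pow_add]
    ring

theorem le_or_exists_lt_of_add_sum_eq {ι : Type*} (T : Finset ι) (f : ι → ℚ) {a r : ℚ}
    (h : a + ∑ i ∈ T, f i = r) : r / (#T + 1) ≤ a ∨ ∃ j ∈ T, r / (#T + 1) < f j := by
  refine or_iff_not_imp_left.mpr fun ha => exists_lt_of_sum_lt ?_
  rw [sum_const, nsmul_eq_mul, ← sub_eq_of_eq_add' h.symm]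
  have : (#T : ℚ) * (r / (#T + 1)) = r - r / (#T + 1) := by field_simp; ring
  linarith [not_le.mp ha]

theorem le_egyptianBound_of_inv_add_sum_eq {ι : Type*} {n : ℕ} (hn : 0 < n)
    (d : ι → ℕ) (k : ℕ) (T : Finset ι) (hT : #T = k) (d₀ : ℕ) {b : ℕ} (hb : 0 < b) (c : ℤ)
    (hsum : 1 / (d₀ : ℚ) + ∑ i ∈ T, (n : ℚ) / d i = c / b) : d₀ ≤ egyptianBound n k b := by
  classical
  induction k using Nat.strong_induction_on generalizing T b c with
  | _ k ih =>
  rcases d₀.eq_zero_or_pos with rfl | hd₀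
  · exact Nat.zero_le _
  set r : ℚ := c / b with hr
  have hr_pos : 0 < r := by
    rw [← hsum]
    have : 0 ≤ ∑ i ∈ T, (n : ℚ) / d i := sum_nonneg fun i _ => by positivity
    positivity
  have hc : (1 : ℚ) ≤ c := by
    exact_mod_cast Int.cast_pos.mp ((div_pos_iff_of_pos_right (by positivity)).mp hr_pos)
  have hlow : 1 / ((k + 1) * b : ℚ) ≤ r / (k + 1) := by
    rw [mul_comm, ← div_div, hr]
    gcongr
  rcases hT ▸ le_or_exists_lt_of_add_sum_eq T _ hsum with hd₀_big | ⟨j, hj, hj_big⟩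
  · have : (d₀ : ℚ) ≤ (k + 1) * b :=
      (one_div_le_one_div (by positivity) (by positivity)).mp (hlow.trans hd₀_big)
    exact le_trans (by exact_mod_cast this) (succ_mul_le_egyptianBound hn k b)
  obtain ⟨k, rfl⟩ : ∃ k', k = k' + 1 := ⟨k - 1, by have := card_pos.mpr ⟨j, hj⟩; omega⟩
  have hdj_pos : 0 < d j := by
    have := (div_pos hr_pos (by positivity)).trans hj_big
    exact_mod_cast (div_pos_iff_of_pos_left (by positivity)).mp this
  have hdj : d j ≤ n * (k + 2) * b := by
    have h := (div_lt_div_iff₀ (by positivity) (by positivity)).mp (hlow.trans_lt hj_big)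
    have : (d j : ℚ) < (n * (k + 2) * b : ℕ) := by push_cast at h ⊢; linarith
    exact_mod_cast this.le
  have hsum' : 1 / (d₀ : ℚ) + ∑ i ∈ T.erase j, (n : ℚ) / d i =
      ((c * d j - n * b : ℤ) : ℚ) / ((b * d j : ℕ) : ℚ) := by
    rw [← sum_erase_add T _ hj, hr] at hsum
    rw [show 1 / (d₀ : ℚ) + ∑ i ∈ T.erase j, (n : ℚ) / d i = c / b - n / d j by linarith]
    push_cast
    field_simp
  calc d₀ ≤ egyptianBound n k (b * d j) :=
        ih k (by omega) (T.erase j) (by rw [card_erase_of_mem hj, hT]; rfl) (by positivity) _ hsum'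
    _ ≤ egyptianBound n k (n * (k + 2) * b ^ 2) :=
        egyptianBound_mono n k (by rw [sq, ← mul_assoc, mul_comm _ b]; gcongr)
    _ = egyptianBound n (k + 1) b := rfl

theorem mul_le_of_inv_add_sum_eq_one {ι : Type*} {n : ℕ} (hn : 0 < n) (T : Finset ι)
    (d : ι → ℕ) {z t : ℕ} (ht : 2 ≤ t) (hd : ∀ i ∈ T, 2 * z ≤ d i)
    (h : 1 / (t : ℚ) + ∑ i ∈ T, (n : ℚ) / d i = 1) :
    z * t ≤ #T * n * egyptianBound n #T 1 := by
  have ht_le : t ≤ egyptianBound n #T 1 :=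
    le_egyptianBound_of_inv_add_sum_eq hn d #T T rfl t one_pos 1 (by simpa using h)
  refine Nat.mul_le_mul ?_ ht_le
  rcases z.eq_zero_or_pos with rfl | hz
  · exact Nat.zero_le _
  have hsum : ∑ i ∈ T, (n : ℚ) / d i ≤ #T • ((n : ℚ) / (2 * z)) :=
    sum_le_card_nsmul _ _ _ fun i hi =>
      div_le_div_of_nonneg_left (Nat.cast_nonneg n) (by positivity) (by exact_mod_cast hd i hi)
  have ht_inv : 1 / (t : ℚ) ≤ 1 / 2 := one_div_le_one_div_of_le two_pos (by exact_mod_cast ht)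
  rw [nsmul_eq_mul] at hsum
  have : (1 : ℚ) / 2 ≤ #T * (n / (2 * z)) := by linarith
  rw [mul_div_assoc', le_div_iff₀ (by positivity)] at this
  exact_mod_cast (by linarith : (z : ℚ) ≤ #T * n)

section Group

variable {G : Type*} [Group G]

def noncentralClassesIn (N : Subgroup G) : Set (Set G) :=
  {C | ∃ x : G, x ∈ N ∧ x ∉ Subgroup.center G ∧ C = conjugatesOf x}

theorem Subgroup.card_inf_mul_relIndex (H K : Subgroup G) :
    Nat.card ↥(H ⊓ K) * H.relIndex K = Nat.card K := by
  rw [← inf_relIndex_right, ← relIndex_bot_left, ← relIndex_bot_left,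
    relIndex_mul_relIndex _ _ _ bot_le inf_le_right]

theorem Subgroup.two_le_relIndex {H K : Subgroup G} [Finite K] (h : ¬K ≤ H) :
    2 ≤ H.relIndex K := by
  have h₀ : H.relIndex K ≠ 0 := index_ne_zero_of_finite
  have h₁ := relIndex_eq_one.not.mpr h
  omega

theorem Subgroup.two_mul_card_le_card_of_lt {H K : Subgroup G} [Finite K] (h : H < K) :
    2 * Nat.card H ≤ Nat.card K := by
  rw [← card_inf_mul_relIndex H K, inf_of_le_left h.le, mul_comm 2]
  exact Nat.mul_le_mul_left _ (two_le_relIndex h.not_ge)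

theorem Subgroup.two_mul_card_center_le_card_centralizer [Finite G] {x : G}
    (hx : x ∉ center G) : 2 * Nat.card (center G) ≤ Nat.card (centralizer {x}) :=
  two_mul_card_le_card_of_lt <| lt_of_le_of_ne (center_le_centralizer _) fun h =>
    hx (h ▸ mem_centralizer_singleton_iff.mpr rfl)

theorem Subgroup.index_centralizer_singleton (x : G) :
    (centralizer {x}).index = (conjugatesOf x).ncard := by
  have h := MulAction.index_stabilizer (ConjAct G) x
  rw [ConjAct.stabilizer_eq_centralizer] at h
  refine h.trans (congrArg Set.ncard (Set.ext fun y => ?_))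
  exact ConjAct.mem_orbit_conjAct.trans isConj_comm

theorem ncard_conjugatesOf_mul_card_centralizer [Finite G] (x : G) :
    (conjugatesOf x).ncard * Nat.card (centralizer {x}) = Nat.card G := by
  rw [← index_centralizer_singleton, index_mul_card]

theorem conjugatesOf_subset_diff_center {N : Subgroup G} [N.Normal] {x : G} (hxN : x ∈ N)
    (hxZ : x ∉ center G) : conjugatesOf x ⊆ (N : Set G) \ center G := fun _ hy =>
  ⟨Group.conjugates_subset_normal hxN hy, fun hyZ => hxZ (hy.eq_of_right_mem_center hyZ ▸ hyZ)⟩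

theorem biUnion_noncentralClassesIn (N : Subgroup G) [N.Normal] :
    ⋃ C ∈ noncentralClassesIn N, C = (N : Set G) \ center G := by
  refine subset_antisymm (Set.iUnion₂_subset ?_) fun y hy => ?_
  · rintro _ ⟨x, hxN, hxZ, rfl⟩
    exact conjugatesOf_subset_diff_center hxN hxZ
  · exact Set.mem_biUnion ⟨y, hy.1, hy.2, rfl⟩ mem_conjugatesOf_self

theorem pairwiseDisjoint_noncentralClassesIn (N : Subgroup G) :
    (noncentralClassesIn N).PairwiseDisjoint id := by
  rintro _ ⟨x, -, -, rfl⟩ _ ⟨y, -, -, rfl⟩ hne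
  refine Set.disjoint_left.mpr fun w hxw hyw => hne ?_
  exact (IsConj.conjugatesOf_eq hxw).trans (IsConj.conjugatesOf_eq hyw).symm

theorem Subgroup.card_eq_card_inf_center_add_finsum [Finite G] (N : Subgroup G) [N.Normal] :
    Nat.card N = Nat.card ↥(N ⊓ center G) + ∑ᶠ C ∈ noncentralClassesIn N, C.ncard := by
  have h := (Set.toFinite _).ncard_biUnion (fun _ _ => Set.toFinite _)
    (pairwiseDisjoint_noncentralClassesIn N)
  simp only [id, biUnion_noncentralClassesIn] at h
  rw [← h, ← SetLike.coe_sort_coe, ← SetLike.coe_sort_coe (N ⊓ center G), Nat.card_coe_set_eq,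
    Nat.card_coe_set_eq, coe_inf, Set.ncard_inter_add_ncard_sdiff_eq_ncard]

theorem ncard_mul_card_div_ncard_of_mem_noncentralClassesIn [Finite G] {N : Subgroup G}
    {C : Set G} (hC : C ∈ noncentralClassesIn N) :
    C.ncard * (Nat.card G / C.ncard) = Nat.card G := by
  obtain ⟨x, -, -, rfl⟩ := hC
  exact Nat.mul_div_cancel' ⟨_, (ncard_conjugatesOf_mul_card_centralizer x).symm⟩

theorem two_mul_card_inf_center_le_of_mem_noncentralClassesIn [Finite G] {N : Subgroup G}
    {C : Set G} (hC : C ∈ noncentralClassesIn N) :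
    2 * Nat.card ↥(N ⊓ center G) ≤ Nat.card G / C.ncard := by
  obtain ⟨x, -, hxZ, rfl⟩ := hC
  rw [← ncard_conjugatesOf_mul_card_centralizer x,
    Nat.mul_div_cancel_left _ ((Set.ncard_pos).2 ⟨x, mem_conjugatesOf_self⟩)]
  exact (Nat.mul_le_mul_left 2 (card_le_of_le inf_le_right)).trans
    (two_mul_card_center_le_card_centralizer hxZ)

theorem inv_relIndex_add_sum_eq_one [Finite G] (N : Subgroup G) [N.Normal]
    (T : Finset (Set G)) (hT : ↑T = noncentralClassesIn N) :
    1 / ((center G).relIndex N : ℚ) + ∑ C ∈ T, (N.index : ℚ) / (Nat.card G / C.ncard : ℕ) = 1 := by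
  have hm : (0 : ℚ) < Nat.card N := by exact_mod_cast Nat.card_pos
  have hterm : ∀ C ∈ T,
      (N.index : ℚ) / (Nat.card G / C.ncard : ℕ) = C.ncard / Nat.card N := by
    intro C hC
    have hCG := ncard_mul_card_div_ncard_of_mem_noncentralClassesIn (hT ▸ mem_coe.mpr hC)
    have hd : (Nat.card G / C.ncard : ℕ) ≠ 0 := by
      rintro h
      rw [h, mul_zero] at hCG
      exact Nat.card_pos.ne' hCG.symm
    rw [div_eq_div_iff (by exact_mod_cast hd) hm.ne']
    exact_mod_cast (hCG.trans (index_mul_card N).symm).symm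
  have hzt : (Nat.card ↥(N ⊓ center G) : ℚ) * (center G).relIndex N = Nat.card N := by
    rw [inf_comm]
    exact_mod_cast card_inf_mul_relIndex (center G) N
  have ht : ((center G).relIndex N : ℚ) ≠ 0 := by
    rintro h
    rw [h, mul_zero] at hzt
    exact hm.ne hzt
  have hclass : (Nat.card N : ℚ) = Nat.card ↥(N ⊓ center G) + ∑ C ∈ T, (C.ncard : ℚ) := by
    rw [card_eq_card_inf_center_add_finsum N, ← hT, finsum_mem_coe_finset]
    push_cast
    rfl
  rw [sum_congr rfl hterm, ← sum_div, div_add_div _ _ ht hm.ne', div_eq_one_iff_eq (by positivity)]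
  linear_combination (-((center G).relIndex N : ℚ)) * hclass - hzt

end Group

theorem card_subgroup_lt_of_normal_subgroup_noncentral_classes_general
    {G : Type*} [Group G] [Finite G] (N : Subgroup G) (hN : N.Normal)
    (n s : ℕ) (hs : 1 ≤ s) (hidx : N.index = n)
    (hcl : {C : Set G | ∃ x : G, x ∈ N ∧ x ∉ Subgroup.center G ∧ C = conjugatesOf x}.ncard = s) :
    Nat.card N <
      n ^ (2 ^ s) * (s + 1) * ∏ i ∈ Finset.range s, (s + 1 - i) ^ 2 ^ (s - 1 - i) := by
  have := hN
  obtain ⟨T, hT⟩ := (Set.toFinite (noncentralClassesIn N)).exists_finset_coe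
  have hTs : #T = s := by rw [← hcl, ← Set.ncard_coe_finset, hT]; rfl
  obtain ⟨C, hC⟩ : T.Nonempty := card_pos.mp (hTs ▸ hs)
  obtain ⟨x, hxN, hxZ, -⟩ : C ∈ noncentralClassesIn N := hT ▸ mem_coe.mpr hC
  have hn : 0 < n := hidx ▸ Nat.pos_of_ne_zero index_ne_zero_of_finite
  have key := mul_le_of_inv_add_sum_eq_one hn T (fun C => Nat.card G / C.ncard)
    (two_le_relIndex fun h => hxZ (h hxN))
    (fun C hC => two_mul_card_inf_center_le_of_mem_noncentralClassesIn (hT ▸ mem_coe.mpr hC))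
    (hidx ▸ inv_relIndex_add_sum_eq_one N T hT)
  rw [inf_comm, card_inf_mul_relIndex, hTs] at key
  have hbound : n * egyptianBound n s 1 =
      n ^ 2 ^ s * ∏ i ∈ range s, (s + 1 - i) ^ 2 ^ (s - 1 - i) := by
    rw [egyptianBound_eq, one_pow, one_mul, ← mul_assoc, ← pow_succ',
      Nat.sub_add_cancel Nat.one_le_two_pow]
  have hpos : 0 < n * egyptianBound n s 1 :=
    Nat.mul_pos hn (lt_of_lt_of_le (by simp) (succ_mul_le_egyptianBound hn s 1))
  calc Nat.card N ≤ s * (n * egyptianBound n s 1) := by rw [← mul_assoc]; exact key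
    _ < (s + 1) * (n * egyptianBound n s 1) := Nat.mul_lt_mul_of_pos_right s.lt_succ_self hpos
    _ = _ := by rw [hbound]; ring

/-- **Theorem A, bound for `|N|`.** If `N ⊴ G` has index `n` and contains
exactly `s` non-central `G`-conjugacy classes, then
`|N| < n^(2^s) * (s+1) * ∏_{i=0}^{s-1} (s+1-i)^(2^(s-1-i))`. -/
theorem card_subgroup_lt_of_normal_subgroup_noncentral_classes
    {G : Type*} [Group G] [Finite G] (N : Subgroup G) (hN : N.Normal)
    (n s : ℕ) (hn : 1 ≤ n) (hs : 1 ≤ s) (hidx : N.index = n)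
    (hcl : {C : Set G | ∃ x : G, x ∈ N ∧ x ∉ Subgroup.center G ∧ C = conjugatesOf x}.ncard = s) :
    Nat.card N <
      n ^ (2 ^ s) * (s + 1) * ∏ i ∈ Finset.range s, (s + 1 - i) ^ 2 ^ (s - 1 - i) :=
  card_subgroup_lt_of_normal_subgroup_noncentral_classes_general N hN n s hs hidx hcl
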